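/- For all bicomplex numbers w and v, ‖wv‖_𝔹 ≤ √2 · ‖w‖_𝔹 · ‖v‖_𝔹. -/

import Mathlib

open Complex MeasureTheory Set Filter intervalIntegral

noncomputable section

/-- The bicomplex numbers, as ℂ² with componentwise addition. -/
abbrev B := ℂ × ℂ

namespace Bicomplex

/-- Bicomplex multiplication: (z₁ + j z₂)(w₁ + j w₂) with j² = −1. -/
def bmul (w v : B) : B := (w.1 * v.1 - w.2 * v.2, w.1 * v.2 + w.2 * v.1)

def bone : B := (1, 0)

/-- The imaginary unit j. -/
def jB : B := (0, 1)

/-- p⁺ = (1 + ij)/2. -/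
def pplus : B := (1/2, Complex.I/2)

/-- p⁻ = (1 − ij)/2. -/
def pminus : B := (1/2, -(Complex.I/2))

/-- Embedding of ℂ into 𝔹. -/
def c2b (c : ℂ) : B := (c, 0)

/-- The idempotent component w⁺ = Sc w − i Vec w. -/
def plus (w : B) : ℂ := w.1 - Complex.I * w.2

/-- The idempotent component w⁻ = Sc w + i Vec w. -/
def minus (w : B) : ℂ := w.1 + Complex.I * w.2

/-- Bicomplex conjugation: (z₁ + j z₂)‾ = z₁ − j z₂. -/
def bconj (w : B) : B := (w.1, -w.2)

/-- The bicomplex norm ‖w‖_𝔹 = √((|w⁺|² + |w⁻|²)/2). -/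
def bnorm (w : B) : ℝ := Real.sqrt ((‖plus w‖ ^ 2 + ‖minus w‖ ^ 2) / 2)

/-- The bicomplex exponential eᵛ = p⁺ e^{v⁺} + p⁻ e^{v⁻}. -/
def bexp (v : B) : B :=
  ((Complex.exp (plus v) + Complex.exp (minus v)) / 2,
   Complex.I * (Complex.exp (plus v) - Complex.exp (minus v)) / 2)

/-- Bicomplex powers. -/
def bpow (w : B) : ℕ → B
  | 0 => bone
  | n + 1 => bmul w (bpow w n)

/-- The open unit disk in ℂ. -/
def DD : Set ℂ := Metric.ball 0 1

/-- ∂/∂x for 𝔹-valued functions (directional real derivative along 1). -/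
def dxd (f : ℂ → B) (z : ℂ) : B := fderiv ℝ f z 1

/-- ∂/∂y for 𝔹-valued functions (directional real derivative along i). -/
def dyd (f : ℂ → B) (z : ℂ) : B := fderiv ℝ f z Complex.I

/-- The bicomplex Cauchy–Riemann operator ∂̄ = (1/2)(∂/∂x + j ∂/∂y). -/
def dbar (f : ℂ → B) (z : ℂ) : B := (2 : ℂ)⁻¹ • (dxd f z + bmul jB (dyd f z))

/-- The bicomplex operator ∂ = (1/2)(∂/∂x − j ∂/∂y). -/
def dd (f : ℂ → B) (z : ℂ) : B := (2 : ℂ)⁻¹ • (dxd f z - bmul jB (dyd f z))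

/-- Wirtinger derivative ∂/∂z on 𝔹-valued functions. -/
def czB (f : ℂ → B) (z : ℂ) : B := (2 : ℂ)⁻¹ • (dxd f z - Complex.I • dyd f z)

/-- Wirtinger derivative ∂/∂z* on 𝔹-valued functions. -/
def czbarB (f : ℂ → B) (z : ℂ) : B := (2 : ℂ)⁻¹ • (dxd f z + Complex.I • dyd f z)

/-- Wirtinger derivative ∂/∂z on ℂ-valued functions. -/
def cdz (g : ℂ → ℂ) (z : ℂ) : ℂ :=
  (2 : ℂ)⁻¹ * (fderiv ℝ g z 1 - Complex.I * fderiv ℝ g z Complex.I)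

/-- Wirtinger derivative ∂/∂z* on ℂ-valued functions. -/
def cdzbar (g : ℂ → ℂ) (z : ℂ) : ℂ :=
  (2 : ℂ)⁻¹ * (fderiv ℝ g z 1 + Complex.I * fderiv ℝ g z Complex.I)

/-- The point r e^{iθ}. -/
def circ (r θ : ℝ) : ℂ := (r : ℂ) * Complex.exp (θ * Complex.I)

/-- The bicomplex Hardy condition sup_{0<r<1} ∫₀^{2π} ‖f(re^{iθ})‖_𝔹^p dθ < ∞. -/
def HardyBound (p : ℝ) (f : ℂ → B) : Prop :=
  ∃ M : ℝ, ∀ r : ℝ, 0 < r → r < 1 →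
    (∫ θ in (0:ℝ)..(2 * Real.pi), bnorm (f (circ r θ)) ^ p) ≤ M

/-- The complex Hardy condition sup_{0<r<1} ∫₀^{2π} |g(re^{iθ})|^p dθ < ∞. -/
def CHardyBound (p : ℝ) (g : ℂ → ℂ) : Prop :=
  ∃ M : ℝ, ∀ r : ℝ, 0 < r → r < 1 →
    (∫ θ in (0:ℝ)..(2 * Real.pi), ‖g (circ r θ)‖ ^ p) ≤ M

/-- Membership in L^p(D, 𝔹). -/
def MemLpB (p : ℝ) (f : ℂ → B) : Prop :=
  IntegrableOn (fun z => bnorm (f z) ^ p) DD volume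

/-- Membership in the complex L^p(D). -/
def MemLpC (p : ℝ) (g : ℂ → ℂ) : Prop :=
  IntegrableOn (fun z => ‖g z‖ ^ p) DD volume

/-- Stolz (nontangential) approach region at ω with aperture M. -/
def stolz (ω : ℂ) (M : ℝ) : Set ℂ :=
  {z | z ∈ DD ∧ ‖z - ω‖ < M * (1 - ‖z‖)}

/-- Nontangential limit of f at the boundary point ω. -/
def HasNTLimit (f : ℂ → B) (ω : ℂ) (L : B) : Prop :=
  ∀ M : ℝ, 1 < M → Tendsto f (nhdsWithin ω (stolz ω M)) (nhds L)

/-- The bicomplex Theodorescu operator. -/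
def TB (f : ℂ → B) (z : ℂ) : B :=
  (-(1 / Real.pi)) •
    ((∫ ζ in DD, ((ζ - z)⁻¹ : ℂ) • f ζ) +
     (∫ ζ in DD, ((starRingEnd ℂ ζ - starRingEnd ℂ z)⁻¹ : ℂ) • bconj (f ζ)))

/-- Membership in the Sobolev space W^{m,q}(D, 𝔹). -/
def MemW (m : ℕ) (q : ℝ) (A : ℂ → B) : Prop :=
  ∀ k ≤ m, IntegrableOn (fun z => ‖iteratedFDeriv ℝ k A z‖ ^ q) DD volume

/-- Iterates of ∂̄. -/
def dbarIter : ℕ → (ℂ → B) → (ℂ → B)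
  | 0, f => f
  | n + 1, f => dbar (dbarIter n f)

/-- The operator ∂̄ − A. -/
def aop (A : ℂ → B) (f : ℂ → B) : ℂ → B := fun z => dbar f z - bmul (A z) (f z)

/-- Iterates of ∂̄ − A. -/
def aopIter (A : ℂ → B) : ℕ → (ℂ → B) → (ℂ → B)
  | 0, f => f
  | n + 1, f => aop A (aopIter A n f)

/-- The operator ∂̄ − A − B C(·). -/
def vop (A Bc : ℂ → B) (f : ℂ → B) : ℂ → B :=
  fun z => dbar f z - bmul (A z) (f z) - bmul (Bc z) (bconj (f z))

/-- Iterates of ∂̄ − A − B C(·). -/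
def vopIter (A Bc : ℂ → B) : ℕ → (ℂ → B) → (ℂ → B)
  | 0, f => f
  | n + 1, f => vop A Bc (vopIter A Bc n f)

/-- Bicomplexification û of u = x + iy is x + jy. -/
def hatc (u : ℂ) : B := ((u.re : ℂ), (u.im : ℂ))

/-- The bicomplexification (z*)ˆ = x − jy of z* = x − iy. -/
def hatConj (z : ℂ) : B := ((z.re : ℂ), (-z.im : ℂ))

end Bicomplex

/-! Multiplication is componentwise in the idempotent components, so
`2‖wv‖² = |w⁺v⁺|² + |w⁻v⁻|² ≤ (|w⁺|² + |w⁻|²)(|v⁺|² + |v⁻|²) = 4‖w‖²‖v‖²`. -/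

namespace Bicomplex

theorem plus_bmul (w v : B) : plus (bmul w v) = plus w * plus v := by
  simp only [plus, bmul]
  linear_combination (-(w.2 * v.2)) * I_sq

theorem minus_bmul (w v : B) : minus (bmul w v) = minus w * minus v := by
  simp only [minus, bmul]
  linear_combination (-(w.2 * v.2)) * I_sq

theorem bnorm_nonneg (w : B) : 0 ≤ bnorm w :=
  Real.sqrt_nonneg _

theorem bnorm_sq (w : B) : bnorm w ^ 2 = (‖plus w‖ ^ 2 + ‖minus w‖ ^ 2) / 2 :=
  Real.sq_sqrt (by positivity)

end Bicomplex

theorem sq_mul_add_sq_mul_le (a b c d : ℝ) :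
    (a * c) ^ 2 + (b * d) ^ 2 ≤ (a ^ 2 + b ^ 2) * (c ^ 2 + d ^ 2) := by
  nlinarith [sq_nonneg (a * d), sq_nonneg (b * c)]

open Bicomplex in
/-- ‖wv‖_𝔹 ≤ √2 ‖w‖_𝔹 ‖v‖_𝔹. -/
theorem bnorm_mul_le (w v : B) :
    bnorm (bmul w v) ≤ Real.sqrt 2 * bnorm w * bnorm v := by
  have hw := bnorm_nonneg w
  have hv := bnorm_nonneg v
  refine le_of_pow_le_pow_left₀ two_ne_zero (by positivity) ?_
  rw [mul_pow, mul_pow, Real.sq_sqrt zero_le_two, bnorm_sq, bnorm_sq, bnorm_sq,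
    plus_bmul, minus_bmul, norm_mul, norm_mul]
  linarith [sq_mul_add_sq_mul_le ‖plus w‖ ‖minus w‖ ‖plus v‖ ‖minus v‖]
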